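/- Let m ≥ 2 be an integer, ξ_m = exp(2πi/m). For complex t with |t| < 1, B(1 − ξ_m^0 t, 1 − ξ_m^1 t, ..., 1 − ξ_m^{m−1} t) = (1/(m−1)!) ∑_{k=0}^∞ S_{m,k}(∞) t^{mk}, where B(α_1,...,α_m) = Γ(α_1)⋯Γ(α_m)/Γ(α_1+...+α_m) is the multiple beta function. -/

import Mathlib

open scoped BigOperators
open Filter Finset

noncomputable def Sfin (a : ℝ) : ℕ → ℕ → ℝ
  | 0, _ => 1
  | k+1, N => ∑ n ∈ Finset.Icc 1 N, ((n : ℝ) ^ a)⁻¹ * Sfin a k n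

noncomputable def Sinf (a : ℝ) : ℕ → ℝ
  | 0 => 1
  | k+1 => ∑' n : ℕ+, ((n : ℝ) ^ a)⁻¹ * Sfin a k n

lemma Sfin_zero (a : ℝ) (N : ℕ) : Sfin a 0 N = 1 := rfl

lemma Sfin_succ (a : ℝ) (k N : ℕ) :
    Sfin a (k+1) N = ∑ n ∈ Finset.Icc 1 N, ((n : ℝ) ^ a)⁻¹ * Sfin a k n := rfl

lemma Sfin_N_zero (a : ℝ) (k : ℕ) (hk : k ≠ 0) : Sfin a k 0 = 0 := by
  cases k with
  | zero => simp at hk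
  | succ k => rw [Sfin_succ]; simp

lemma Sfin_one (a : ℝ) (k : ℕ) : Sfin a k 1 = 1 := by
  induction k with
  | zero => rfl
  | succ k ih => rw [Sfin_succ]; simp [ih]

lemma Sfin_succ_top (a : ℝ) (k N : ℕ) :
    Sfin a (k+1) (N+1) = Sfin a (k+1) N + (((N+1 : ℕ) : ℝ) ^ a)⁻¹ * Sfin a k (N+1) := by
  rw [Sfin_succ, Sfin_succ, Finset.sum_Icc_succ_top (Nat.le_add_left 1 N)]

lemma Sfin_nonneg (a : ℝ) (k N : ℕ) : 0 ≤ Sfin a k N := by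
  induction k generalizing N with
  | zero => rw [Sfin_zero]; norm_num
  | succ k ih =>
      rw [Sfin_succ]
      exact Finset.sum_nonneg fun n _ => mul_nonneg (inv_nonneg.2 (Real.rpow_nonneg (Nat.cast_nonneg n) a)) (ih n)

lemma rpow_nat_ge_sq (m : ℕ) (hm : 2 ≤ m) (N : ℕ) :
    ((N+1 : ℝ))^2 ≤ (((N+1 : ℕ) : ℝ)) ^ (m : ℝ) := by
  push_cast
  rw [show ((N:ℝ)+1)^2 = ((N:ℝ)+1)^((2:ℕ):ℝ) by rw [Real.rpow_natCast]]
  apply Real.rpow_le_rpow_of_exponent_le (by norm_num)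
  exact_mod_cast hm

lemma Sfin_le_bound (m : ℕ) (hm : 2 ≤ m) :
    ∀ N, 1 ≤ N → ∀ k, Sfin m k N ≤ 2*N/(N+1) := by
  intro N
  induction N with
  | zero => omega
  | succ N ihN =>
      intro _ k
      rcases Nat.eq_zero_or_pos N with hN0 | hN1
      · subst hN0; rw [Sfin_one]; norm_num
      have hx1 : (1:ℝ) ≤ (N:ℝ) := by exact_mod_cast hN1
      have hq0 : (0:ℝ) ≤ (((N:ℝ)+1) ^ (m : ℝ))⁻¹ := by positivity
      have hq : (((N:ℝ)+1) ^ (m : ℝ))⁻¹ ≤ (((N:ℝ)+1)^2)⁻¹ := by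
        apply inv_anti₀ (by positivity)
        have := rpow_nat_ge_sq m hm N
        push_cast at this ⊢
        linarith
      induction k with
      | zero =>
          rw [Sfin_zero, le_div_iff₀ (by positivity)]
          push_cast
          nlinarith
      | succ k ihk =>
          rw [Sfin_succ_top]
          have hs0 : 0 ≤ Sfin m k (N+1) := Sfin_nonneg _ _ _
          have h1 : Sfin m (k+1) N ≤ 2*N/(N+1) := ihN hN1 (k+1)
          push_cast at ihk
          have h3 : (((N:ℝ)+1) ^ (m : ℝ))⁻¹ * Sfin m k (N+1)
              ≤ (((N:ℝ)+1)^2)⁻¹ * (2*((N:ℝ)+1)/((N:ℝ)+1+1)) :=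
            mul_le_mul hq ihk hs0 (by positivity)
          have key : 2*(N:ℝ)/(N+1) + (((N:ℝ)+1)^2)⁻¹ * (2*((N:ℝ)+1)/((N:ℝ)+1+1))
              = 2*((N:ℝ)+1)/((N:ℝ)+1+1) := by
            field_simp
            ring
          push_cast at h1 ⊢
          linarith

lemma Sfin_le_two (m : ℕ) (hm : 2 ≤ m) (k N : ℕ) : Sfin m k N ≤ 2 := by
  rcases Nat.eq_zero_or_pos N with h | h
  · subst h
    cases k with
    | zero => rw [Sfin_zero]; norm_num
    | succ k => rw [Sfin_N_zero _ _ (Nat.succ_ne_zero k)]; norm_num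
  · calc Sfin m k N ≤ 2*N/(N+1) := Sfin_le_bound m hm N h k
      _ ≤ 2 := by
          rw [div_le_iff₀ (by positivity)]
          push_cast; linarith

lemma summable_aux (m : ℕ) (hm : 2 ≤ m) (k : ℕ) :
    Summable (fun n : ℕ => ((((n+1) : ℕ) : ℝ) ^ ((m:ℕ) : ℝ))⁻¹ * Sfin m k (n+1)) := by
  apply Summable.of_nonneg_of_le
  · intro n
    exact mul_nonneg (by positivity) (Sfin_nonneg _ _ _)
  · intro n
    show ((((n+1) : ℕ) : ℝ) ^ ((m:ℕ) : ℝ))⁻¹ * Sfin m k (n+1)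
        ≤ ((((n+1) : ℕ) : ℝ) ^ ((m:ℕ) : ℝ))⁻¹ * 2
    exact mul_le_mul_of_nonneg_left (Sfin_le_two m hm _ _) (by positivity)
  · apply Summable.mul_right
    have h1 : Summable (fun n : ℕ => ((n : ℝ) ^ ((m:ℕ) : ℝ))⁻¹) := by
      rw [Real.summable_nat_rpow_inv]
      exact_mod_cast lt_of_lt_of_le one_lt_two (by exact_mod_cast hm)
    exact ((summable_nat_add_iff 1).2 h1).congr (fun n => by push_cast; ring_nf)

lemma Sinf_succ_eq (m : ℕ) (hm : 2 ≤ m) (k : ℕ) :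
    Sinf m (k+1) = ∑' n : ℕ, ((((n+1) : ℕ) : ℝ) ^ ((m:ℕ) : ℝ))⁻¹ * Sfin m k (n+1) := by
  show ∑' n : ℕ+, (((n:ℕ) : ℝ) ^ ((m:ℕ):ℝ))⁻¹ * Sfin m k n = _
  rw [← Equiv.pnatEquivNat.symm.tsum_eq]
  congr 1

lemma sum_Icc_one (f : ℕ → ℝ) (N : ℕ) :
    ∑ n ∈ Finset.Icc 1 N, f n = ∑ i ∈ Finset.range N, f (i+1) := by
  induction N with
  | zero => simp
  | succ N ih => rw [Finset.sum_Icc_succ_top (Nat.le_add_left 1 N), ih, Finset.sum_range_succ]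

lemma tendsto_Sfin (m : ℕ) (hm : 2 ≤ m) (k : ℕ) :
    Tendsto (fun N => Sfin m k N) atTop (nhds (Sinf m k)) := by
  cases k with
  | zero =>
      have : Sinf (m:ℝ) 0 = 1 := rfl
      rw [this]
      simpa [Sfin_zero] using (tendsto_const_nhds : Tendsto (fun _ : ℕ => (1:ℝ)) atTop (nhds 1))
  | succ k =>
      rw [Sinf_succ_eq m hm k]
      have := (summable_aux m hm k).hasSum.tendsto_sum_nat
      apply this.congr
      intro N
      rw [Sfin_succ, sum_Icc_one]

lemma Sinf_nonneg (m : ℕ) (hm : 2 ≤ m) (k : ℕ) : 0 ≤ Sinf m k :=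
  ge_of_tendsto (tendsto_Sfin m hm k) (Eventually.of_forall fun N => Sfin_nonneg _ _ _)

lemma Sinf_le_two (m : ℕ) (hm : 2 ≤ m) (k : ℕ) : Sinf m k ≤ 2 :=
  le_of_tendsto (tendsto_Sfin m hm k) (Eventually.of_forall fun N => Sfin_le_two m hm _ _)

noncomputable def Fgen (m : ℕ) (x : ℂ) (N : ℕ) : ℂ := ∑' k : ℕ, ((Sfin m k N : ℝ) : ℂ) * x ^ k

lemma summable_F (m : ℕ) (hm : 2 ≤ m) {x : ℂ} (hx : ‖x‖ < 1) (N : ℕ) :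
    Summable (fun k : ℕ => ((Sfin m k N : ℝ) : ℂ) * x ^ k) := by
  apply Summable.of_norm_bounded (g := fun k : ℕ => 2 * ‖x‖ ^ k)
      (((summable_geometric_of_lt_one (norm_nonneg x) hx)).mul_left 2)
  intro k
  rw [norm_mul, norm_pow, Complex.norm_real, Real.norm_eq_abs]
  apply mul_le_mul_of_nonneg_right _ (by positivity)
  rw [abs_of_nonneg (Sfin_nonneg _ _ _)]
  exact Sfin_le_two m hm _ _

lemma Fgen_zero (m : ℕ) (x : ℂ) : Fgen m x 0 = 1 := by
  rw [Fgen, tsum_eq_single 0]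
  · simp [Sfin_zero]
  · intro k hk
    rw [Sfin_N_zero _ _ hk]
    simp

lemma cast_pow_aux (m N : ℕ) :
    (((((N+1 : ℕ) : ℝ) ^ ((m:ℕ) : ℝ))⁻¹ : ℝ) : ℂ) = ((((N+1 : ℕ)) : ℂ) ^ m)⁻¹ := by
  rw [Real.rpow_natCast]
  push_cast
  ring

set_option maxHeartbeats 1000000 in
lemma Fgen_rec (m : ℕ) (hm : 2 ≤ m) {x : ℂ} (hx : ‖x‖ < 1) (N : ℕ) :
    (1 - x / (((N+1 : ℕ)) : ℂ) ^ m) * Fgen m x (N+1) = Fgen m x N := by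
  set c : ℂ := x / (((N+1 : ℕ)) : ℂ) ^ m with hc
  have hd : Summable (fun k : ℕ => ((Sfin m k (N+1) : ℝ) : ℂ) * x ^ k) := summable_F m hm hx (N+1)
  have ha : Summable (fun k : ℕ => ((Sfin m k N : ℝ) : ℂ) * x ^ k) := summable_F m hm hx N
  have hb : Summable (fun k : ℕ => ((Sfin m (k+1) N : ℝ) : ℂ) * x ^ (k+1)) :=
    (summable_nat_add_iff 1).mpr ha
  have key : ∀ k : ℕ, ((Sfin m (k+1) (N+1) : ℝ) : ℂ) * x ^ (k+1)
      = ((Sfin m (k+1) N : ℝ) : ℂ) * x ^ (k+1) + c * (((Sfin m k (N+1) : ℝ) : ℂ) * x ^ k) := by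
    intro k
    rw [Sfin_succ_top, hc]
    push_cast [Real.rpow_natCast]
    ring
  have h0 : Fgen m x (N+1) = 1 + ∑' k : ℕ, ((Sfin m (k+1) (N+1) : ℝ) : ℂ) * x ^ (k+1) := by
    rw [Fgen, hd.tsum_eq_zero_add, Sfin_zero]
    norm_num
  have h1 : Fgen m x N = 1 + ∑' k : ℕ, ((Sfin m (k+1) N : ℝ) : ℂ) * x ^ (k+1) := by
    rw [Fgen, ha.tsum_eq_zero_add, Sfin_zero]
    norm_num
  have h2 : ∑' k : ℕ, ((Sfin m (k+1) (N+1) : ℝ) : ℂ) * x ^ (k+1)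
      = (∑' k : ℕ, ((Sfin m (k+1) N : ℝ) : ℂ) * x ^ (k+1)) + c * Fgen m x (N+1) := by
    rw [Fgen, ← tsum_mul_left, ← hb.tsum_add (hd.mul_left c)]
    exact tsum_congr key
  linear_combination h0 + h2 - h1

lemma factor_ne (m : ℕ) {x : ℂ} (hx : ‖x‖ < 1) (i : ℕ) :
    ‖x / (((i+1 : ℕ)) : ℂ) ^ m‖ < 1 := by
  rw [norm_div, norm_pow, Complex.norm_natCast]
  have h1 : (1:ℝ) ≤ ((i+1 : ℕ) : ℝ) ^ m :=
    one_le_pow₀ (by exact_mod_cast Nat.succ_le_succ (Nat.zero_le i))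
  calc ‖x‖ / ((i+1 : ℕ) : ℝ) ^ m ≤ ‖x‖ :=
        div_le_self (norm_nonneg x) h1
    _ < 1 := hx

lemma factor_ne' (m : ℕ) {x : ℂ} (hx : ‖x‖ < 1) (i : ℕ) :
    (1 : ℂ) - x / (((i+1 : ℕ)) : ℂ) ^ m ≠ 0 := by
  intro h
  have h2 : x / (((i+1 : ℕ)) : ℂ) ^ m = 1 := by linear_combination -h
  have := factor_ne m hx i
  rw [h2] at this
  simp at this

lemma Fgen_prod (m : ℕ) (hm : 2 ≤ m) {x : ℂ} (hx : ‖x‖ < 1) (N : ℕ) :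
    (∏ i ∈ Finset.range N, (1 - x / (((i+1 : ℕ)) : ℂ) ^ m)) * Fgen m x N = 1 := by
  induction N with
  | zero => simp [Fgen_zero]
  | succ N ih =>
      rw [Finset.prod_range_succ, mul_assoc, Fgen_rec m hm hx N, ih]

lemma tendsto_Fgen (m : ℕ) (hm : 2 ≤ m) {x : ℂ} (hx : ‖x‖ < 1) :
    Tendsto (Fgen m x) atTop (nhds (∑' k : ℕ, ((Sinf m k : ℝ) : ℂ) * x ^ k)) := by
  have : Tendsto (fun N => ∑' k : ℕ, ((Sfin m k N : ℝ) : ℂ) * x ^ k) atTop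
      (nhds (∑' k : ℕ, ((Sinf m k : ℝ) : ℂ) * x ^ k)) := by
    apply tendsto_tsum_of_dominated_convergence
        (bound := fun k : ℕ => 2 * ‖x‖ ^ k)
        ((summable_geometric_of_lt_one (norm_nonneg x) hx).mul_left 2)
    · intro k
      exact ((Complex.continuous_ofReal.tendsto _).comp (tendsto_Sfin m hm k)).mul_const (x ^ k)
    · apply Eventually.of_forall
      intro N k
      rw [norm_mul, norm_pow, Complex.norm_real, Real.norm_eq_abs,
        abs_of_nonneg (Sfin_nonneg _ _ _)]
      exact mul_le_mul_of_nonneg_right (Sfin_le_two m hm _ _) (by positivity)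
  exact this

lemma cpow_finset_sum {ι : Type*} {w : ℂ} (hw : w ≠ 0) (s : Finset ι) (f : ι → ℂ) :
    w ^ (∑ j ∈ s, f j) = ∏ j ∈ s, w ^ f j := by
  classical
  induction s using Finset.induction with
  | empty => simp
  | insert a s h ih =>
      rw [Finset.sum_insert h, Finset.prod_insert h, Complex.cpow_add _ _ hw, ih]

lemma prod_root (m : ℕ) (hm : 2 ≤ m) (t z : ℂ) :
    ∏ j ∈ Finset.range m, (z - Complex.exp (2 * Real.pi * Complex.I / m) ^ j * t)
      = z ^ m - t ^ m := by
  have hζ := Complex.isPrimitiveRoot_exp m (by omega)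
  have hroots : Polynomial.nthRoots m (t ^ m)
      = (Multiset.range m).map ((Complex.exp (2 * Real.pi * Complex.I / m)) ^ · * t) :=
    hζ.nthRoots_eq rfl
  have hmonic : (Polynomial.X ^ m - Polynomial.C (t ^ m)).Monic :=
    Polynomial.monic_X_pow_sub_C _ (by omega)
  have heq := (IsAlgClosed.splits _).eq_prod_roots_of_monic hmonic
  have : (Polynomial.X ^ m - Polynomial.C (t ^ m)).roots = Polynomial.nthRoots m (t ^ m) := rfl
  rw [this, hroots] at heq
  calc ∏ j ∈ Finset.range m, (z - Complex.exp (2 * Real.pi * Complex.I / m) ^ j * t)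
      = Polynomial.eval z (((Multiset.range m).map
          ((Complex.exp (2 * Real.pi * Complex.I / m)) ^ · * t)).map
          (fun a => Polynomial.X - Polynomial.C a)).prod := by
        rw [Polynomial.eval_multiset_prod, Multiset.map_map, Multiset.map_map,
          Finset.prod_eq_multiset_prod, Finset.range_val]
        congr 1
        apply Multiset.map_congr rfl
        intro j _
        simp
    _ = Polynomial.eval z (Polynomial.X ^ m - Polynomial.C (t ^ m)) := by rw [← heq]
    _ = z ^ m - t ^ m := by simp

section main
variable (m : ℕ) (t : ℂ)

lemma abs_zeta_pow (hm : 2 ≤ m) (j : ℕ) :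
    ‖Complex.exp (2 * Real.pi * Complex.I / m) ^ j‖ = 1 := by
  rw [norm_pow]
  have h : ‖Complex.exp (2 * Real.pi * Complex.I / m)‖ = 1 := by
    rw [Complex.norm_exp]
    have : (2 * (Real.pi:ℂ) * Complex.I / (m:ℂ)).re = 0 := by
      rw [show 2 * (Real.pi:ℂ) * Complex.I / (m:ℂ)
          = (((2 * Real.pi / m : ℝ)) : ℂ) * Complex.I by push_cast; ring]
      simp
    rw [this, Real.exp_zero]
  rw [h, one_pow]

lemma sum_s_eq (hm : 2 ≤ m) :
    ∑ j ∈ Finset.range m, (1 - Complex.exp (2 * Real.pi * Complex.I / m) ^ j * t)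
      = (m : ℂ) := by
  have hζ := Complex.isPrimitiveRoot_exp m (by omega)
  rw [Finset.sum_sub_distrib, ← Finset.sum_mul, hζ.geom_sum_eq_zero (by omega)]
  simp

lemma s_add_ne (hm : 2 ≤ m) (ht : ‖t‖ < 1) (j i : ℕ) :
    (1 - Complex.exp (2 * Real.pi * Complex.I / m) ^ j * t + (i : ℂ)) ≠ 0 := by
  set ζ := Complex.exp (2 * Real.pi * Complex.I / m)
  have habs : ‖ζ ^ j * t‖ < 1 := by
    rw [norm_mul, abs_zeta_pow m hm j, one_mul]; exact ht
  have hre : (ζ ^ j * t).re < 1 := lt_of_le_of_lt (Complex.re_le_norm _) habs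
  intro h
  have := congrArg Complex.re h
  simp only [Complex.add_re, Complex.sub_re, Complex.one_re, Complex.natCast_re,
    Complex.zero_re] at this
  have : (0:ℝ) ≤ (i:ℝ) := Nat.cast_nonneg i
  linarith [congrArg Complex.re h, Nat.cast_nonneg (α := ℝ) i,
    (by simpa using congrArg Complex.re h : 1 - (ζ ^ j * t).re + (i:ℝ) = 0)]

lemma prod_GammaSeq (hm : 2 ≤ m) (ht : ‖t‖ < 1) {n : ℕ} (hn : 1 ≤ n) :
    ∏ j ∈ Finset.range m,
        Complex.GammaSeq (1 - Complex.exp (2 * Real.pi * Complex.I / m) ^ j * t) n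
      = ((n : ℂ) / ((n : ℂ) + 1)) ^ m * Fgen m (t ^ m) (n + 1) := by
  set ζ := Complex.exp (2 * Real.pi * Complex.I / m) with hζdef
  have hx : ‖t ^ m‖ < 1 := by
    rw [norm_pow]
    exact pow_lt_one₀ (norm_nonneg t) ht (by omega)
  have hn0 : ((n:ℂ)) ≠ 0 := Nat.cast_ne_zero.2 (by omega)
  simp only [Complex.GammaSeq]
  rw [Finset.prod_div_distrib, Finset.prod_mul_distrib]
  have hA : ∏ j ∈ Finset.range m, (n:ℂ) ^ (1 - ζ ^ j * t) = (n:ℂ) ^ m := by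
    rw [← cpow_finset_sum hn0, sum_s_eq m t hm, Complex.cpow_natCast]
  have hB : ∏ _j ∈ Finset.range m, ((Nat.factorial n : ℕ) : ℂ) = ((Nat.factorial n : ℕ) : ℂ) ^ m := by
    rw [Finset.prod_const, Finset.card_range]
  have hC : ∏ j ∈ Finset.range m, ∏ i ∈ Finset.range (n+1), (1 - ζ ^ j * t + (i:ℂ))
      = ∏ i ∈ Finset.range (n+1), (((i:ℂ) + 1) ^ m - t ^ m) := by
    rw [Finset.prod_comm]
    apply Finset.prod_congr rfl
    intro i _
    have : ∀ j, (1 - ζ ^ j * t + (i:ℂ)) = (((i:ℂ) + 1) - ζ ^ j * t) := by intro j; ring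
    simp only [this]
    exact prod_root m hm t ((i:ℂ) + 1)
  have hD : ∏ i ∈ Finset.range (n+1), (((i:ℂ) + 1) ^ m - t ^ m)
      = ((Nat.factorial (n+1) : ℕ) : ℂ) ^ m
        * ∏ i ∈ Finset.range (n+1), (1 - t ^ m / (((i+1 : ℕ)) : ℂ) ^ m) := by
    have hfac : ∀ i : ℕ, (((i:ℂ) + 1) ^ m - t ^ m)
        = (((i+1 : ℕ)) : ℂ) ^ m * (1 - t ^ m / (((i+1 : ℕ)) : ℂ) ^ m) := by
      intro i
      have hne : ((((i+1 : ℕ)) : ℂ)) ^ m ≠ 0 := pow_ne_zero _ (Nat.cast_ne_zero.2 (Nat.succ_ne_zero i))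
      push_cast
      push_cast at hne
      rw [mul_sub, mul_one, mul_div_cancel₀ _ hne]
    rw [Finset.prod_congr rfl (fun i _ => hfac i), Finset.prod_mul_distrib, Finset.prod_pow]
    congr 2
    rw [← Nat.cast_prod]
    congr 1
    exact_mod_cast Finset.prod_range_add_one_eq_factorial (n+1)
  rw [hA, hB, hC, hD]
  have hP := Fgen_prod m hm hx (n+1)
  set F := Fgen m (t ^ m) (n + 1) with hF
  set P := ∏ i ∈ Finset.range (n+1), (1 - t ^ m / (((i+1 : ℕ)) : ℂ) ^ m) with hPdef
  have hPne : P ≠ 0 := by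
    rw [hPdef]
    exact Finset.prod_ne_zero_iff.2 fun i _ => factor_ne' m hx i
  have hFne : F ≠ 0 := by
    intro h
    rw [h, mul_zero] at hP
    exact one_ne_zero hP.symm
  have hfacne : ((Nat.factorial n : ℕ) : ℂ) ≠ 0 := Nat.cast_ne_zero.2 (Nat.factorial_ne_zero n)
  have hn1ne : ((n:ℂ) + 1) ≠ 0 := by
    intro h
    have := congrArg Complex.re h
    simp at this
    linarith [Nat.cast_nonneg (α := ℝ) n]
  have hfs : ((Nat.factorial (n+1) : ℕ) : ℂ) = ((n:ℂ) + 1) * ((Nat.factorial n : ℕ) : ℂ) := by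
    rw [Nat.factorial_succ]
    push_cast
    ring
  have hFP : F = P⁻¹ := eq_inv_of_mul_eq_one_left (by rw [mul_comm] at hP; exact hP)
  rw [hfs, hFP, div_pow, mul_pow]
  field_simp
end main

/-- for `m ≥ 2`, `ξ = e^{2πi/m}` and `|t| < 1`,
`B(1-ξ⁰t, …, 1-ξ^{m-1}t) = (1/(m-1)!) ∑ₖ S_{m,k}(∞) t^{mk}`,
where `B(α₁,…,αₘ) = Γ(α₁)⋯Γ(αₘ)/Γ(α₁+⋯+αₘ)`. -/
theorem statement15 (m : ℕ) (hm : 2 ≤ m) (t : ℂ) (ht : ‖t‖ < 1) :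
    (∏ j ∈ Finset.range m,
        Complex.Gamma (1 - Complex.exp (2 * Real.pi * Complex.I / m) ^ j * t)) /
      Complex.Gamma
        (∑ j ∈ Finset.range m,
          (1 - Complex.exp (2 * Real.pi * Complex.I / m) ^ j * t)) =
    (1 / ((m - 1).factorial : ℂ)) * ∑' k : ℕ, (Sinf m k : ℂ) * t ^ (m * k) := by
  have hx : ‖t ^ m‖ < 1 := by
    rw [norm_pow]
    exact pow_lt_one₀ (norm_nonneg t) ht (by omega)
  set ζ := Complex.exp (2 * Real.pi * Complex.I / m) with hζdef
  set L := ∑' k : ℕ, ((Sinf m k : ℝ) : ℂ) * (t ^ m) ^ k with hL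
  have hGamma_lim : Tendsto (fun n => ∏ j ∈ Finset.range m,
      Complex.GammaSeq (1 - ζ ^ j * t) n) atTop
      (nhds (∏ j ∈ Finset.range m, Complex.Gamma (1 - ζ ^ j * t))) :=
    tendsto_finset_prod _ (fun j _ => Complex.GammaSeq_tendsto_Gamma _)
  have hOther : Tendsto (fun n : ℕ => ((n : ℂ) / ((n : ℂ) + 1)) ^ m * Fgen m (t ^ m) (n + 1))
      atTop (nhds ((1:ℂ) ^ m * L)) :=
    ((tendsto_natCast_div_add_atTop (1:ℂ)).pow m).mul
      ((tendsto_Fgen m hm hx).comp (tendsto_add_atTop_nat 1))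
  have heq : (fun n => ∏ j ∈ Finset.range m, Complex.GammaSeq (1 - ζ ^ j * t) n)
      =ᶠ[atTop] (fun n : ℕ => ((n : ℂ) / ((n : ℂ) + 1)) ^ m * Fgen m (t ^ m) (n + 1)) := by
    filter_upwards [eventually_ge_atTop 1] with n hn
    exact prod_GammaSeq m t hm ht hn
  have hprodΓ : ∏ j ∈ Finset.range m, Complex.Gamma (1 - ζ ^ j * t) = L := by
    have := tendsto_nhds_unique hGamma_lim (hOther.congr' heq.symm)
    rwa [one_pow, one_mul] at this
  rw [hprodΓ, sum_s_eq m t hm]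
  have hGm : Complex.Gamma (m : ℂ) = ((m - 1).factorial : ℂ) := by
    rw [show ((m:ℕ) : ℂ) = ((m - 1 : ℕ) : ℂ) + 1 by
      push_cast [Nat.cast_sub (by omega : 1 ≤ m)]; ring]
    exact Complex.Gamma_nat_eq_factorial (m - 1)
  rw [hGm, hL]
  have hfac : ((m - 1).factorial : ℂ) ≠ 0 := Nat.cast_ne_zero.2 (Nat.factorial_ne_zero _)
  rw [tsum_congr (fun k : ℕ => by rw [pow_mul] : ∀ k : ℕ,
    ((Sinf m k : ℝ) : ℂ) * t ^ (m * k) = ((Sinf m k : ℝ) : ℂ) * (t ^ m) ^ k)]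
  field_simp
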